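/- arXiv:2406.12047 — 3 statements merged into one kernel-verified Lean document; each statement's English description precedes it below -/
import Mathlib

section
/- Let λ₁ ≤ λ₂ ≤ ... be a nondecreasing sequence of nonnegative reals with λ₁ < L for some L > 0, let c_k = a_k(1 - λ_k/L) where a_k ≥ 0 and ∑ a_k converges, and suppose ∑ c_k = 0. If there exist k with c_k > 0, then for all t > 0, ∑_{k} c_k e^{-λ_k t} > 0. -/
/-- Let (λ_k) be a nondecreasing sequence of nonnegative reals with λ₀ < L for some L > 0,
let c_k = a_k (1 - λ_k / L) with a_k ≥ 0 and ∑ a_k convergent, and suppose ∑ c_k = 0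
(convergently). If some c_k > 0, then for all t > 0, ∑_k c_k e^{-λ_k t} > 0. -/
theorem stmt_4 (lam a : ℕ → ℝ) (L : ℝ) (hL : 0 < L)
    (hmono : Monotone lam) (hlam : ∀ k, 0 ≤ lam k)
    (ha : ∀ k, 0 ≤ a k) (hsum : Summable a)
    (c : ℕ → ℝ) (hc : ∀ k, c k = a k * (1 - lam k / L))
    (hfirst : lam 0 < L)
    (hcsum : Summable c) (hczero : ∑' k, c k = 0)
    (hpos : ∃ k, 0 < c k) :
    ∀ t > (0:ℝ), 0 < ∑' k, c k * Real.exp (-lam k * t) := by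
  intro t ht
  obtain ⟨k0, hk0⟩ := hpos
  -- b k = a k - c k = a k * (lam k / L) is nonnegative and summable
  have hb : Summable (fun k => a k - c k) := hsum.sub hcsum
  have hbnn : ∀ k, 0 ≤ a k - c k := by
    intro k
    rw [hc k]
    have h1 := ha k
    have h2 := hlam k
    have h3 : 0 ≤ lam k / L := div_nonneg h2 hL.le
    nlinarith
  -- absolute summability of c
  have habs : Summable (fun k => |c k|) := by
    refine Summable.of_nonneg_of_le (fun k => abs_nonneg _) (fun k => ?_) (hsum.add hb)
    have h1 := ha k
    have h2 := hbnn k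
    rcases abs_cases (c k) with ⟨h, _⟩ | ⟨h, _⟩ <;> linarith
  -- summability of the series with exponential weights
  have hfsum : Summable (fun k => c k * Real.exp (-lam k * t)) := by
    apply Summable.of_abs
    refine Summable.of_nonneg_of_le (fun k => abs_nonneg _) (fun k => ?_) habs
    rw [abs_mul, abs_of_pos (Real.exp_pos _)]
    have hle : Real.exp (-lam k * t) ≤ 1 := by
      rw [Real.exp_le_one_iff]
      have := hlam k
      nlinarith
    nlinarith [abs_nonneg (c k)]
  -- comparison series g k = c k * exp(-L t)
  set E : ℝ := Real.exp (-L * t) with hE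
  have hgsum : Summable (fun k => c k * E) := hcsum.mul_right E
  have hgval : ∑' k, c k * E = 0 := by
    rw [tsum_mul_right, hczero, zero_mul]
  -- pointwise inequality
  have hle : ∀ k, c k * E ≤ c k * Real.exp (-lam k * t) := by
    intro k
    rcases le_or_gt (lam k) L with h | h
    · have hck : 0 ≤ c k := by
        rw [hc k]
        have : lam k / L ≤ 1 := (div_le_one hL).mpr h
        nlinarith [ha k]
      have : E ≤ Real.exp (-lam k * t) := by
        apply Real.exp_le_exp.mpr
        nlinarith
      nlinarith
    · have hck : c k ≤ 0 := by
        rw [hc k]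
        have : 1 < lam k / L := (one_lt_div hL).mpr h
        nlinarith [ha k]
      have : Real.exp (-lam k * t) ≤ E := by
        apply Real.exp_le_exp.mpr
        nlinarith
      nlinarith
  -- strict inequality at k0
  have hlt : c k0 * E < c k0 * Real.exp (-lam k0 * t) := by
    have hlamk0 : lam k0 < L := by
      by_contra h
      push_neg at h
      have : 1 ≤ lam k0 / L := (one_le_div hL).mpr h
      have := ha k0
      rw [hc k0] at hk0
      nlinarith
    have : E < Real.exp (-lam k0 * t) := by
      apply Real.exp_lt_exp.mpr
      nlinarith
    nlinarith
  calc (0:ℝ) = ∑' k, c k * E := hgval.symm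
    _ < ∑' k, c k * Real.exp (-lam k * t) := Summable.tsum_lt_tsum hle hlt hgsum hfsum
end

section
/- On the right triangle Ω_W with vertices (0,0), (W,0), (0,1), the quadratic function ψ(x₁,x₂) = b₀₀ + b₁₀x₁ + b₀₁x₂ + b₂₀x₁² + b₀₂x₂² with b₁₀ = b₀₁ = √(2/W) and b₂₀ = b₀₂ = -√(1/(2W))·(1 + W + √(1+W²))/W satisfies -∇²ψ = |Ω_W|^{-1/2}·γ_W in Ω_W and ∂_nψ = -|Ω_W|^{-1/2} on each of the three edges, where |Ω_W| = W/2 and γ_W = (1 + W + √(1+W²))/(W/2). -/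
/-- On the right triangle Ω_W with vertices (0,0), (W,0), (0,1), the quadratic
ψ(x₁,x₂) = b₀₀ + b₁₀x₁ + b₀₁x₂ + b₂₀x₁² + b₀₂x₂² with b₁₀ = b₀₁ = √(2/W),
b₂₀ = b₀₂ = -√(1/(2W))(1 + W + √(1+W²))/W satisfies -∇²ψ = |Ω_W|^{-1/2} γ_W in Ω_W
and ∂_nψ = -|Ω_W|^{-1/2} on each of the three edges, where |Ω_W| = W/2 and
γ_W = (1 + W + √(1+W²))/(W/2). -/
theorem stmt_12 (W : ℝ) (hW : 0 < W) (b₀₀ : ℝ) :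
    let b₁₀ : ℝ := Real.sqrt (2 / W)
    let b₀₁ : ℝ := Real.sqrt (2 / W)
    let b₂₀ : ℝ := -Real.sqrt (1 / (2 * W)) * (1 + W + Real.sqrt (1 + W ^ 2)) / W
    let b₀₂ : ℝ := -Real.sqrt (1 / (2 * W)) * (1 + W + Real.sqrt (1 + W ^ 2)) / W
    let ψ : ℝ → ℝ → ℝ := fun x₁ x₂ =>
      b₀₀ + b₁₀ * x₁ + b₀₁ * x₂ + b₂₀ * x₁ ^ 2 + b₀₂ * x₂ ^ 2
    let area : ℝ := W / 2
    let γ : ℝ := (1 + W + Real.sqrt (1 + W ^ 2)) / area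
    let d₁ : ℝ → ℝ → ℝ := fun x₁ _ => b₁₀ + 2 * b₂₀ * x₁
    let d₂ : ℝ → ℝ → ℝ := fun _ x₂ => b₀₁ + 2 * b₀₂ * x₂
    -- d₁, d₂ are the partial derivatives of ψ, with constant second derivatives
    (∀ x₁ x₂ : ℝ, HasDerivAt (fun t => ψ t x₂) (d₁ x₁ x₂) x₁) ∧
    (∀ x₁ x₂ : ℝ, HasDerivAt (fun t => ψ x₁ t) (d₂ x₁ x₂) x₂) ∧
    (∀ x₁ x₂ : ℝ, HasDerivAt (fun t => d₁ t x₂) (2 * b₂₀) x₁) ∧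
    (∀ x₁ x₂ : ℝ, HasDerivAt (fun t => d₂ x₁ t) (2 * b₀₂) x₂) ∧
    -- PDE: -∇²ψ = |Ω_W|^{-1/2} γ_W
    (-(2 * b₂₀ + 2 * b₀₂) = (Real.sqrt area)⁻¹ * γ) ∧
    -- bottom edge x₂ = 0, outward normal (0,-1)
    (∀ x₁ ∈ Set.Icc 0 W, -(d₂ x₁ 0) = -(Real.sqrt area)⁻¹) ∧
    -- left edge x₁ = 0, outward normal (-1,0)
    (∀ x₂ ∈ Set.Icc (0:ℝ) 1, -(d₁ 0 x₂) = -(Real.sqrt area)⁻¹) ∧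
    -- hypotenuse x₁/W + x₂ = 1, outward unit normal (1,W)/√(1+W²)
    (∀ x₁ x₂ : ℝ, x₁ / W + x₂ = 1 →
      (d₁ x₁ x₂ + W * d₂ x₁ x₂) / Real.sqrt (1 + W ^ 2) = -(Real.sqrt area)⁻¹) := by
  intro b₁₀ b₀₁ b₂₀ b₀₂ ψ area γ d₁ d₂
  set s : ℝ := Real.sqrt (2 / W) with hs
  have hWne : W ≠ 0 := hW.ne'
  -- √(1/(2W)) = s/2
  have h1 : Real.sqrt (1 / (2 * W)) = s / 2 := by
    rw [hs, show (1 : ℝ) / (2 * W) = (2 / W) / 4 by field_simp; ring,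
      Real.sqrt_div (by positivity), show (4:ℝ) = 2^2 by norm_num, Real.sqrt_sq (by norm_num)]
  -- (√(W/2))⁻¹ = s
  have h2 : (Real.sqrt area)⁻¹ = s := by
    rw [hs, show area = W / 2 from rfl, ← Real.sqrt_inv,
      show (W / 2)⁻¹ = 2 / W by field_simp]
  have hQ : Real.sqrt (1 + W ^ 2) > 0 := Real.sqrt_pos.mpr (by positivity)
  have hQ2 : Real.sqrt (1 + W ^ 2) ^ 2 = 1 + W ^ 2 :=
    Real.sq_sqrt (by positivity)
  refine ⟨?_, ?_, ?_, ?_, ?_, ?_, ?_, ?_⟩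
  · intro x₁ x₂
    have h : HasDerivAt (fun t : ℝ => b₀₀ + b₁₀ * t + b₀₁ * x₂ + b₂₀ * t ^ 2 + b₀₂ * x₂ ^ 2)
        (0 + b₁₀ * 1 + 0 + b₂₀ * (2 * x₁ ^ 1) + 0) x₁ := by
      exact ((((hasDerivAt_const x₁ b₀₀).add ((hasDerivAt_id x₁).const_mul b₁₀)).add
        (hasDerivAt_const x₁ (b₀₁ * x₂))).add ((hasDerivAt_pow 2 x₁).const_mul b₂₀)).add
        (hasDerivAt_const x₁ (b₀₂ * x₂ ^ 2))
    convert h using 1; ring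
  · intro x₁ x₂
    have h : HasDerivAt (fun t : ℝ => b₀₀ + b₁₀ * x₁ + b₀₁ * t + b₂₀ * x₁ ^ 2 + b₀₂ * t ^ 2)
        (0 + 0 + b₀₁ * 1 + 0 + b₀₂ * (2 * x₂ ^ 1)) x₂ := by
      exact ((((hasDerivAt_const x₂ b₀₀).add (hasDerivAt_const x₂ (b₁₀ * x₁))).add
        ((hasDerivAt_id x₂).const_mul b₀₁)).add (hasDerivAt_const x₂ (b₂₀ * x₁ ^ 2))).add
        ((hasDerivAt_pow 2 x₂).const_mul b₀₂)
    convert h using 1; ring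
  · intro x₁ x₂
    have h : HasDerivAt (fun t : ℝ => b₁₀ + 2 * b₂₀ * t) (0 + 2 * b₂₀ * 1) x₁ :=
      (hasDerivAt_const x₁ b₁₀).add ((hasDerivAt_id x₁).const_mul (2 * b₂₀))
    convert h using 1; ring
  · intro x₁ x₂
    have h : HasDerivAt (fun t : ℝ => b₀₁ + 2 * b₀₂ * t) (0 + 2 * b₀₂ * 1) x₂ :=
      (hasDerivAt_const x₂ b₀₁).add ((hasDerivAt_id x₂).const_mul (2 * b₀₂))
    convert h using 1; ring
  · show -(2 * (-Real.sqrt (1 / (2 * W)) * (1 + W + Real.sqrt (1 + W ^ 2)) / W) +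
      2 * (-Real.sqrt (1 / (2 * W)) * (1 + W + Real.sqrt (1 + W ^ 2)) / W)) =
      (Real.sqrt area)⁻¹ * ((1 + W + Real.sqrt (1 + W ^ 2)) / (W / 2))
    rw [h1, h2]; field_simp; ring
  · intro x₁ _
    show -(s + 2 * b₀₂ * 0) = -(Real.sqrt area)⁻¹
    rw [h2]; ring
  · intro x₂ _
    show -(s + 2 * b₂₀ * 0) = -(Real.sqrt area)⁻¹
    rw [h2]; ring
  · intro x₁ x₂ hx
    show (s + 2 * (-Real.sqrt (1 / (2 * W)) * (1 + W + Real.sqrt (1 + W ^ 2)) / W) * x₁ +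
        W * (s + 2 * (-Real.sqrt (1 / (2 * W)) * (1 + W + Real.sqrt (1 + W ^ 2)) / W) * x₂)) /
        Real.sqrt (1 + W ^ 2) = -(Real.sqrt area)⁻¹
    rw [h1, h2]
    have hx' : x₁ + W * x₂ = W := by
      have := hx
      field_simp at this
      linarith
    rw [div_eq_iff hQ.ne']
    have : s + 2 * (-(s / 2) * (1 + W + Real.sqrt (1 + W ^ 2)) / W) * x₁ +
        W * (s + 2 * (-(s / 2) * (1 + W + Real.sqrt (1 + W ^ 2)) / W) * x₂) =
        s * (1 + W) - s * (1 + W + Real.sqrt (1 + W ^ 2)) / W * (x₁ + W * x₂) := by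
      ring
    rw [this, hx']
    field_simp
    nlinarith [hQ2, Real.sqrt_nonneg (2 / W), hQ]
end

section
/- With ψ as above on Ω_W (W > 0), φ(W) := ∫_{Ω_W} |∇ψ|² satisfies φ(W) · W² → 2/3 as W → 0⁺. -/
/-!
For ψ = a(x₁ + x₂) + (c/2)(x₁² + x₂²) the Dirichlet energy on Ω_W is an explicit polynomial in
`a`, `c`, `W`. With the given coefficients `a² ~ 1/W`, `ac ~ 1/W²`, `c² ~ 1/W³`, so `W² φ(W)` is a
continuous function of `W` (through `√(1 + W²)`), whose value at `W = 0` is `(1 + 1)² / 6 = 2/3`.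
-/

open Real Filter Topology

lemma integral_cubic (C D E F b : ℝ) :
    ∫ x in (0:ℝ)..b, (C + D * x + E * x ^ 2 + F * x ^ 3)
      = C * b + D * b ^ 2 / 2 + E * b ^ 3 / 3 + F * b ^ 4 / 4 := by
  have hderiv : ∀ x ∈ Set.uIcc (0:ℝ) b,
      HasDerivAt (fun x : ℝ => C * x ^ 1 + D * x ^ 2 / 2 + (E * x ^ 3 / 3 + F * x ^ 4 / 4))
        (C + D * x + E * x ^ 2 + F * x ^ 3) x := by
    intro x _
    refine ((((hasDerivAt_pow 1 x).const_mul C).add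
        (((hasDerivAt_pow 2 x).const_mul D).div_const 2)).add
      ((((hasDerivAt_pow 3 x).const_mul E).div_const 3).add
        (((hasDerivAt_pow 4 x).const_mul F).div_const 4))).congr_deriv ?_
    ring
  rw [intervalIntegral.integral_eq_sub_of_hasDerivAt hderiv
    (Continuous.intervalIntegrable (by fun_prop) _ _)]
  ring

lemma integral_triangle_sq_add_sq (a c W : ℝ) (hW : W ≠ 0) :
    (∫ x₁ in (0:ℝ)..W, ∫ x₂ in (0:ℝ)..(1 - x₁ / W), ((a + c * x₁) ^ 2 + (a + c * x₂) ^ 2))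
      = a ^ 2 * W + a * c * W * (1 + W) / 3 + c ^ 2 * W * (1 + W ^ 2) / 12 := by
  have inner : ∀ x₁ : ℝ,
      (∫ x₂ in (0:ℝ)..(1 - x₁ / W), ((a + c * x₁) ^ 2 + (a + c * x₂) ^ 2))
        = ((a + c * x₁) ^ 2 + a ^ 2) * (1 - x₁ / W) + 2 * a * c * (1 - x₁ / W) ^ 2 / 2
            + c ^ 2 * (1 - x₁ / W) ^ 3 / 3 + 0 * (1 - x₁ / W) ^ 4 / 4 := by
    intro x₁
    rw [← integral_cubic]
    congr 1
    ext x₂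
    ring
  simp only [inner]
  have outer : (fun x₁ : ℝ => ((a + c * x₁) ^ 2 + a ^ 2) * (1 - x₁ / W)
        + 2 * a * c * (1 - x₁ / W) ^ 2 / 2 + c ^ 2 * (1 - x₁ / W) ^ 3 / 3 + 0 * (1 - x₁ / W) ^ 4 / 4)
      = fun x₁ => (2 * a ^ 2 + a * c + c ^ 2 / 3)
          + (2 * a * c - 2 * a ^ 2 / W - 2 * a * c / W - c ^ 2 / W) * x₁
          + (c ^ 2 - 2 * a * c / W + a * c / W ^ 2 + c ^ 2 / W ^ 2) * x₁ ^ 2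
          + (-c ^ 2 / W - c ^ 2 / (3 * W ^ 3)) * x₁ ^ 3 := by
    ext x₁
    ring
  rw [outer, integral_cubic]
  field_simp
  ring

lemma sq_mul_energy_eq (K W : ℝ) (hW : 0 < W) :
    let a := √(2 / W)
    let c := 2 * (-√(1 / (2 * W)) * K / W)
    W ^ 2 * (a ^ 2 * W + a * c * W * (1 + W) / 3 + c ^ 2 * W * (1 + W ^ 2) / 12)
      = 2 * W ^ 2 - 2 / 3 * K * (1 + W) * W + K ^ 2 * (1 + W ^ 2) / 6 := by
  intro a c
  have ha2 : a ^ 2 = 2 / W := sq_sqrt (by positivity)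
  have hs2 : √(1 / (2 * W)) ^ 2 = 1 / (2 * W) := sq_sqrt (by positivity)
  have has : a * √(1 / (2 * W)) = 1 / W := by
    rw [← sqrt_mul (by positivity), show 2 / W * (1 / (2 * W)) = (1 / W) ^ 2 by field_simp]
    exact sqrt_sq (by positivity)
  have hac : a * c = -2 * K / W ^ 2 := by
    rw [show a * c = -2 * (a * √(1 / (2 * W))) * K / W by ring, has]
    field_simp
  have hc2 : c ^ 2 = 2 * K ^ 2 / W ^ 3 := by
    rw [show c ^ 2 = 4 * √(1 / (2 * W)) ^ 2 * K ^ 2 / W ^ 2 by ring, hs2]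
    field_simp
    ring
  rw [ha2, hac, hc2]
  field_simp
  ring

/-- With the quadratic sensitivity solution ψ on the right triangle Ω_W
(vertices (0,0), (W,0), (0,1)), φ(W) = ∫_{Ω_W} |∇ψ|² satisfies W² φ(W) → 2/3
as W → 0⁺. -/
theorem stmt_13 :
    let φ : ℝ → ℝ := fun W =>
      ∫ x₁ in (0:ℝ)..W, ∫ x₂ in (0:ℝ)..(1 - x₁ / W),
        ((Real.sqrt (2 / W) +
            2 * (-Real.sqrt (1 / (2 * W)) * (1 + W + Real.sqrt (1 + W ^ 2)) / W) * x₁) ^ 2 +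
         (Real.sqrt (2 / W) +
            2 * (-Real.sqrt (1 / (2 * W)) * (1 + W + Real.sqrt (1 + W ^ 2)) / W) * x₂) ^ 2)
    Filter.Tendsto (fun W => W ^ 2 * φ W) (nhdsWithin 0 (Set.Ioi 0)) (nhds (2 / 3)) := by
  intro φ
  let g : ℝ → ℝ := fun W =>
    2 * W ^ 2 - 2 / 3 * (1 + W + √(1 + W ^ 2)) * (1 + W) * W
      + (1 + W + √(1 + W ^ 2)) ^ 2 * (1 + W ^ 2) / 6
  have hg : Tendsto g (𝓝 0) (𝓝 (2 / 3)) := by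
    have hg0 : g 0 = 2 / 3 := by norm_num [g]
    exact hg0 ▸ (show Continuous g by fun_prop).tendsto 0
  refine (tendsto_nhdsWithin_of_tendsto_nhds hg).congr' ?_
  filter_upwards [self_mem_nhdsWithin] with W (hW : 0 < W)
  dsimp only [φ]
  rw [integral_triangle_sq_add_sq _ _ _ hW.ne', sq_mul_energy_eq _ _ hW]
end
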